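/- Let n ≥ 4 and 1 ≤ d ≤ n−3. The kernel of π̃_* : ℚSP_{d+1,n+1} → ℚSP_{d+1,n} equals the image of π̃* : ℚSP_{d,n} → ℚSP_{d+1,n+1} plus the span of all elements {P₁∪{n+1},P₂,P₃,…,P_{d+4}} − {P₁,P₂∪{n+1},P₃,…,P_{d+4}}, over all set partitions {P₁,…,P_{d+4}} of [n] with d+4 parts and all choices of two distinguished parts P₁,P₂. -/
import Mathlib


/-! Common definitions: free ℚ-vector spaces on finite sets of subsets/partitions of
`[n] = {1,…,n}`, the pairing ⟨Π,T⟩, the maps φ̃, α, β, π̃*, π̃_*, odd, even, γ,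
and the relation subspace `R_{d,n}`. -/

/-- `B` is a set partition of `[n] = {1,…,n}`: the parts are nonempty, pairwise
disjoint, and their union is `{1,…,n}`. -/
def IsPartition (n : ℕ) (B : Finset (Finset ℕ)) : Prop :=
  (∀ P ∈ B, P.Nonempty) ∧ (∀ P ∈ B, ∀ Q ∈ B, P ≠ Q → P ∩ Q = ∅) ∧
    B.sup id = Finset.Icc 1 n

instance (n : ℕ) (B : Finset (Finset ℕ)) : Decidable (IsPartition n B) := by
  unfold IsPartition; infer_instance

/-- `SP_{d,n}`: the set of set partitions of `[n]` into exactly `d+3` nonempty parts. -/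
def SPf (d : ℤ) (n : ℕ) : Finset (Finset (Finset ℕ)) :=
  ((Finset.Icc 1 n).powerset.powerset).filter
    (fun B => IsPartition n B ∧ (B.card : ℤ) = d + 3)

/-- `K^d_n = {T ⊆ [n] : |T| ≥ d+3, |T| ≡ d+3 (mod 2)}`. -/
def Kf (d : ℤ) (n : ℕ) : Finset (Finset ℕ) :=
  (Finset.Icc 1 n).powerset.filter
    (fun T => d + 3 ≤ (T.card : ℤ) ∧ (T.card : ℤ) % 2 = (d + 3) % 2)

/-- The basis vector of the free vector space `ℚS = (↥S → ℚ)` corresponding to `a`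
(the zero vector if `a ∉ S`). -/
def bvec {A : Type*} [DecidableEq A] (S : Finset A) (a : A) : ↥S → ℚ :=
  fun x => if x.val = a then 1 else 0

/-- The pairing `⟨B,T⟩`: `1` if `T` meets every part of `B`, else `0`. -/
def pairPT (B : Finset (Finset ℕ)) (T : Finset ℕ) : ℚ :=
  if ∀ P ∈ B, (P ∩ T).Nonempty then 1 else 0

/-- The linear map `φ̃_{d,n} : ℚSP_{d,n} → ℚK^d_n`, `Π ↦ Σ_{T ∈ K^d_n} ⟨Π,T⟩·T`. -/
noncomputable def phiT (d : ℤ) (n : ℕ) : (↥(SPf d n) → ℚ) →ₗ[ℚ] (↥(Kf d n) → ℚ) :=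
  Matrix.mulVecLin (Matrix.of fun T B => pairPT B.val T.val)

/-- Generic "insert `n+1`" map between free vector spaces on finite families of
subsets of `ℕ`: sends the basis vector of `T` to the basis vector of `T ∪ {n+1}`. -/
noncomputable def insMap (n : ℕ) (S S' : Finset (Finset ℕ)) :
    (↥S → ℚ) →ₗ[ℚ] (↥S' → ℚ) :=
  Matrix.mulVecLin (Matrix.of fun T' T =>
    if T'.val = insert (n+1) T.val then (1 : ℚ) else 0)

/-- Generic "forget `n+1`" map: sends the basis vector of `T` to itself if
`n+1 ∉ T` and to `0` otherwise. -/
noncomputable def resMap (n : ℕ) (S S' : Finset (Finset ℕ)) :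
    (↥S → ℚ) →ₗ[ℚ] (↥S' → ℚ) :=
  Matrix.mulVecLin (Matrix.of fun T' T =>
    if T.val = T'.val ∧ n+1 ∉ T.val then (1 : ℚ) else 0)

/-- `α : ℚK^d_n → ℚK^{d+1}_{n+1}`, `T ↦ T ∪ {n+1}`. -/
noncomputable def alphaK (d : ℤ) (n : ℕ) : (↥(Kf d n) → ℚ) →ₗ[ℚ] (↥(Kf (d+1) (n+1)) → ℚ) :=
  insMap n (Kf d n) (Kf (d+1) (n+1))

/-- `β : ℚK^d_{n+1} → ℚK^d_n`, `T ↦ T` if `n+1 ∉ T`, else `T ↦ 0`. -/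
noncomputable def betaK (d : ℤ) (n : ℕ) : (↥(Kf d (n+1)) → ℚ) →ₗ[ℚ] (↥(Kf d n) → ℚ) :=
  resMap n (Kf d (n+1)) (Kf d n)

/-- `π̃^* : ℚSP_{d,n} → ℚSP_{d+1,n+1}`, `Π ↦ Π ∪ {{n+1}}`. -/
noncomputable def piUp (d : ℤ) (n : ℕ) :
    (↥(SPf d n) → ℚ) →ₗ[ℚ] (↥(SPf (d+1) (n+1)) → ℚ) :=
  Matrix.mulVecLin (Matrix.of fun B' B =>
    if B'.val = insert {n+1} B.val then (1 : ℚ) else 0)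

/-- `π̃_* : ℚSP_{d,n+1} → ℚSP_{d,n}`: a partition `Π` of `[n+1]` goes to `0` if
`{n+1}` is a part of `Π`, and otherwise to `{P \ {n+1} : P ∈ Π}`. -/
noncomputable def piDown (d : ℤ) (n : ℕ) :
    (↥(SPf d (n+1)) → ℚ) →ₗ[ℚ] (↥(SPf d n) → ℚ) :=
  Matrix.mulVecLin (Matrix.of fun B' B =>
    if ({n+1} : Finset ℕ) ∉ B.val ∧
        B'.val = B.val.image (fun P => P.erase (n+1)) then (1 : ℚ) else 0)

/-- The subspace `R_{d,n} ⊆ ℚSP_{d,n}` spanned by the Keel/Kontsevich–Manin type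
relations: for every partition `S` of `[n]` with `d+4` parts and distinct parts
`P₁,P₂,P₃,P₄ ∈ S`, the element
`{P₁∪P₂,…} + {P₃∪P₄,…} − {P₁∪P₃,…} − {P₂∪P₄,…}`. -/
noncomputable def Rsub (d : ℤ) (n : ℕ) : Submodule ℚ (↥(SPf d n) → ℚ) :=
  Submodule.span ℚ { v | ∃ S : Finset (Finset ℕ), ∃ P1 P2 P3 P4 : Finset ℕ,
    IsPartition n S ∧ (S.card : ℤ) = d + 4 ∧
    P1 ∈ S ∧ P2 ∈ S ∧ P3 ∈ S ∧ P4 ∈ S ∧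
    P1 ≠ P2 ∧ P1 ≠ P3 ∧ P1 ≠ P4 ∧ P2 ≠ P3 ∧ P2 ≠ P4 ∧ P3 ≠ P4 ∧
    v = bvec (SPf d n) (insert (P1 ∪ P2) ((S.erase P1).erase P2))
      + bvec (SPf d n) (insert (P3 ∪ P4) ((S.erase P3).erase P4))
      - bvec (SPf d n) (insert (P1 ∪ P3) ((S.erase P1).erase P3))
      - bvec (SPf d n) (insert (P2 ∪ P4) ((S.erase P2).erase P4)) }

/-- `F_n = {(P₁,P₂) : P₁ ∪ P₂ = [n], P₁ ∩ P₂ = ∅, 1 ∈ P₁}`. -/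
def Fset (n : ℕ) : Finset (Finset ℕ × Finset ℕ) :=
  ((Finset.Icc 1 n).powerset ×ˢ (Finset.Icc 1 n).powerset).filter
    (fun p => p.1 ∪ p.2 = Finset.Icc 1 n ∧ p.1 ∩ p.2 = ∅ ∧ 1 ∈ p.1)

/-- `E_n`: subsets of `[n]` of even cardinality. -/
def Eset (n : ℕ) : Finset (Finset ℕ) :=
  (Finset.Icc 1 n).powerset.filter (fun T => T.card % 2 = 0)

/-- `O_n`: subsets of `[n]` of odd cardinality. -/
def Oset (n : ℕ) : Finset (Finset ℕ) :=
  (Finset.Icc 1 n).powerset.filter (fun T => T.card % 2 = 1)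

/-- `odd_n : ℚF_n → ℚO_n`, `(P₁,P₂) ↦ −Σ_{T⊆P₁, |T| odd} T + Σ_{T⊆P₂, |T| odd} T`. -/
noncomputable def oddMap (n : ℕ) : (↥(Fset n) → ℚ) →ₗ[ℚ] (↥(Oset n) → ℚ) :=
  Matrix.mulVecLin (Matrix.of fun T p =>
    (if T.val ⊆ p.val.1 then (-1 : ℚ) else 0) + (if T.val ⊆ p.val.2 then (1 : ℚ) else 0))

/-- `even_n : ℚF_n → ℚE_n`, `(P₁,P₂) ↦ −Σ_{T⊆P₁, |T| even} T − Σ_{T⊆P₂, |T| even} T`. -/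
noncomputable def evenMap (n : ℕ) : (↥(Fset n) → ℚ) →ₗ[ℚ] (↥(Eset n) → ℚ) :=
  Matrix.mulVecLin (Matrix.of fun T p =>
    (if T.val ⊆ p.val.1 then (-1 : ℚ) else 0) + (if T.val ⊆ p.val.2 then (-1 : ℚ) else 0))

/-- `γ : ℚF_n → ℚF_{n+1}`, `(P₁,P₂) ↦ (P₁∪{n+1},P₂) − (P₁,P₂∪{n+1})`. -/
noncomputable def gammaMap (n : ℕ) : (↥(Fset n) → ℚ) →ₗ[ℚ] (↥(Fset (n+1)) → ℚ) :=
  Matrix.mulVecLin (Matrix.of fun q p =>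
    (if q.val = (insert (n+1) p.val.1, p.val.2) then (1 : ℚ) else 0)
    - (if q.val = (p.val.1, insert (n+1) p.val.2) then (1 : ℚ) else 0))

/-- `π̃'_* : ℚF_{n+1} → ℚF_n`, `(P₁,P₂) ↦ (P₁∖{n+1}, P₂∖{n+1})`. -/
noncomputable def piDownF (n : ℕ) : (↥(Fset (n+1)) → ℚ) →ₗ[ℚ] (↥(Fset n) → ℚ) :=
  Matrix.mulVecLin (Matrix.of fun q p =>
    if q.val = (p.val.1.erase (n+1), p.val.2.erase (n+1)) then (1 : ℚ) else 0)

section Aux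

open Finset

variable {n : ℕ} {B : Finset (Finset ℕ)}

lemma part_subset (h : IsPartition n B) {P : Finset ℕ} (hP : P ∈ B) :
    P ⊆ Finset.Icc 1 n := by
  have := h.2.2 ▸ Finset.le_sup (f := id) hP
  exact this

lemma exists_part (h : IsPartition n B) {a : ℕ} (ha : a ∈ Finset.Icc 1 n) :
    ∃ P ∈ B, a ∈ P := by
  have : a ∈ B.sup id := h.2.2 ▸ ha
  simpa using (Finset.mem_sup).1 this

lemma part_unique (h : IsPartition n B) {P Q : Finset ℕ} (hP : P ∈ B) (hQ : Q ∈ B)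
    {a : ℕ} (haP : a ∈ P) (haQ : a ∈ Q) : P = Q := by
  by_contra hne
  have h0 := h.2.1 P hP Q hQ hne
  have : a ∈ P ∩ Q := Finset.mem_inter.2 ⟨haP, haQ⟩
  rw [h0] at this
  exact absurd this (Finset.notMem_empty a)

lemma mem_SPf {d : ℤ} {B : Finset (Finset ℕ)} :
    B ∈ SPf d n ↔ IsPartition n B ∧ (B.card : ℤ) = d + 3 := by
  constructor
  · intro h
    exact (Finset.mem_filter.1 h).2
  · intro h
    refine Finset.mem_filter.2 ⟨?_, h⟩
    refine Finset.mem_powerset.2 (fun P hP => Finset.mem_powerset.2 (part_subset h.1 hP))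

end Aux
section Aux2
variable {n : ℕ}

lemma notMem_part {S : Finset (Finset ℕ)} (h : IsPartition n S) {P : Finset ℕ}
    (hP : P ∈ S) : n + 1 ∉ P := by
  intro hm
  have := part_subset h hP hm
  simp [Finset.mem_Icc] at this

/-- Lemma D: inserting `n+1` into a part of a partition of `[n]`. -/
lemma insert_part_partition {S : Finset (Finset ℕ)} (h : IsPartition n S)
    {P : Finset ℕ} (hP : P ∈ S) :
    IsPartition (n+1) (insert (insert (n+1) P) (S.erase P)) ∧
    (insert (insert (n+1) P) (S.erase P)).card = S.card ∧
    ({n+1} : Finset ℕ) ∉ insert (insert (n+1) P) (S.erase P) ∧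
    (insert (insert (n+1) P) (S.erase P)).image (fun Q => Q.erase (n+1)) = S := by
  have hn1P : n + 1 ∉ P := notMem_part h hP
  have hQnot : insert (n+1) P ∉ S.erase P := fun hmem =>
    notMem_part h (Finset.mem_of_mem_erase hmem) (Finset.mem_insert_self _ _)
  have hdisj : ∀ R ∈ S.erase P, (insert (n+1) P) ∩ R = ∅ := by
    intro R hR
    have hRS := Finset.mem_of_mem_erase hR
    have hRP : R ≠ P := Finset.ne_of_mem_erase hR
    have h0 := h.2.1 P hP R hRS (Ne.symm hRP)
    ext a
    simp only [Finset.mem_inter, Finset.mem_insert, Finset.notMem_empty, iff_false]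
    rintro ⟨(rfl | haP), haR⟩
    · exact notMem_part h hRS haR
    · have : a ∈ P ∩ R := Finset.mem_inter.2 ⟨haP, haR⟩
      rw [h0] at this; exact Finset.notMem_empty a this
  refine ⟨⟨?_, ?_, ?_⟩, ?_, ?_, ?_⟩
  · intro R hR
    rcases Finset.mem_insert.1 hR with rfl | hR
    · exact Finset.insert_nonempty _ _
    · exact h.1 R (Finset.mem_of_mem_erase hR)
  · intro R1 h1 R2 h2 hne
    rcases Finset.mem_insert.1 h1 with rfl | h1 <;> rcases Finset.mem_insert.1 h2 with rfl | h2
    · exact absurd rfl hne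
    · exact hdisj R2 h2
    · rw [Finset.inter_comm]; exact hdisj R1 h1
    · exact h.2.1 R1 (Finset.mem_of_mem_erase h1) R2 (Finset.mem_of_mem_erase h2) hne
  · ext a
    simp only [Finset.mem_sup, id, Finset.mem_Icc]
    constructor
    · rintro ⟨R, hR, haR⟩
      rcases Finset.mem_insert.1 hR with rfl | hR
      · rcases Finset.mem_insert.1 haR with rfl | haR
        · omega
        · have := part_subset h hP haR; simp [Finset.mem_Icc] at this; omega
      · have := part_subset h (Finset.mem_of_mem_erase hR) haR
        simp [Finset.mem_Icc] at this; omega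
    · rintro ⟨h1a, han⟩
      by_cases hcase : a = n + 1
      · exact ⟨insert (n+1) P, Finset.mem_insert_self _ _, by simp [hcase]⟩
      · have ha : a ∈ Finset.Icc 1 n := Finset.mem_Icc.2 ⟨h1a, by omega⟩
        obtain ⟨R, hR, haR⟩ := exists_part h ha
        by_cases hRP : R = P
        · exact ⟨insert (n+1) P, Finset.mem_insert_self _ _,
            Finset.mem_insert_of_mem (hRP ▸ haR)⟩
        · exact ⟨R, Finset.mem_insert_of_mem (Finset.mem_erase.2 ⟨hRP, hR⟩), haR⟩
  · rw [Finset.card_insert_of_notMem hQnot, Finset.card_erase_of_mem hP]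
    have : 1 ≤ S.card := Finset.card_pos.2 ⟨P, hP⟩
    omega
  · intro hmem
    rcases Finset.mem_insert.1 hmem with heq | hmem
    · obtain ⟨a, haP⟩ := h.1 P hP
      have : a ∈ ({n+1} : Finset ℕ) := heq ▸ Finset.mem_insert_of_mem haP
      simp at this
      exact hn1P (this ▸ haP)
    · exact notMem_part h (Finset.mem_of_mem_erase hmem) (Finset.mem_singleton_self _)
  · rw [Finset.image_insert, Finset.erase_insert hn1P]
    have himg : (S.erase P).image (fun Q => Q.erase (n+1)) = S.erase P := by
      rw [Finset.image_congr (g := id), Finset.image_id]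
      intro Q hQ
      exact Finset.erase_eq_of_notMem (notMem_part h (Finset.mem_of_mem_erase hQ))
    rw [himg, Finset.insert_erase hP]

end Aux2
section Aux3
variable {n : ℕ}

/-- Lemma C: if `{n+1}` is a part, erasing it gives a partition of `[n]`. -/
lemma singleton_case {d : ℤ} {Pi : Finset (Finset ℕ)} (hPi : Pi ∈ SPf (d+1) (n+1))
    (hs : ({n+1} : Finset ℕ) ∈ Pi) :
    Pi.erase {n+1} ∈ SPf d n ∧ insert ({n+1} : Finset ℕ) (Pi.erase {n+1}) = Pi := by
  obtain ⟨hpart, hcard⟩ := mem_SPf.1 hPi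
  have huniq : ∀ R ∈ Pi, n + 1 ∈ R → R = {n+1} :=
    fun R hR hn1 => part_unique hpart hR hs hn1 (Finset.mem_singleton_self _)
  refine ⟨mem_SPf.2 ⟨⟨?_, ?_, ?_⟩, ?_⟩, Finset.insert_erase hs⟩
  · exact fun P hP => hpart.1 P (Finset.mem_of_mem_erase hP)
  · exact fun P hP Q hQ hne =>
      hpart.2.1 P (Finset.mem_of_mem_erase hP) Q (Finset.mem_of_mem_erase hQ) hne
  · ext a
    simp only [Finset.mem_sup, id, Finset.mem_Icc]
    constructor
    · rintro ⟨R, hR, haR⟩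
      have hRS := Finset.mem_of_mem_erase hR
      have := part_subset hpart hRS haR
      simp only [Finset.mem_Icc] at this
      have hane : a ≠ n + 1 := by
        intro rfl'
        exact Finset.ne_of_mem_erase hR (huniq R hRS (rfl' ▸ haR))
      omega
    · rintro ⟨h1a, han⟩
      obtain ⟨R, hR, haR⟩ := exists_part hpart (Finset.mem_Icc.2 ⟨h1a, by omega⟩)
      refine ⟨R, Finset.mem_erase.2 ⟨?_, hR⟩, haR⟩
      intro rfl'
      have : a = n + 1 := Finset.mem_singleton.1 (rfl' ▸ haR)
      omega
  · rw [Finset.card_erase_of_mem hs]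
    have : 1 ≤ Pi.card := Finset.card_pos.2 ⟨_, hs⟩
    push_cast [Nat.cast_sub this]
    omega

/-- Lemma B: if `{n+1}` is not a part, `Pi` decomposes as `n+1` inserted into a part. -/
lemma partition_decomp {d : ℤ} {Pi : Finset (Finset ℕ)} (hPi : Pi ∈ SPf (d+1) (n+1))
    (hs : ({n+1} : Finset ℕ) ∉ Pi) :
    ∃ P, P ∈ Pi.image (fun Q => Q.erase (n+1)) ∧
      Pi.image (fun Q => Q.erase (n+1)) ∈ SPf (d+1) n ∧
      Pi = insert (insert (n+1) P) ((Pi.image (fun Q => Q.erase (n+1))).erase P) := by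
  obtain ⟨hpart, hcard⟩ := mem_SPf.1 hPi
  obtain ⟨Q, hQ, hn1Q⟩ := exists_part hpart (Finset.mem_Icc.2 ⟨by omega, le_refl _⟩)
  have hother : ∀ R ∈ Pi, R ≠ Q → n + 1 ∉ R := by
    intro R hR hne hn1R
    exact hne (part_unique hpart hR hQ hn1R hn1Q)
  have hothereq : ∀ R ∈ Pi, R ≠ Q → R.erase (n+1) = R :=
    fun R hR hne => Finset.erase_eq_of_notMem (hother R hR hne)
  set P := Q.erase (n+1) with hPdef
  have hQP : insert (n+1) P = Q := Finset.insert_erase hn1Q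
  have hPne : P.Nonempty := by
    by_contra hemp
    rw [Finset.not_nonempty_iff_eq_empty] at hemp
    apply hs
    have : Q = {n+1} := by
      ext a
      simp only [Finset.mem_singleton]
      constructor
      · intro haQ
        by_contra hne
        have : a ∈ P := Finset.mem_erase.2 ⟨hne, haQ⟩
        rw [hemp] at this; exact Finset.notMem_empty a this
      · rintro rfl; exact hn1Q
    exact this ▸ hQ
  have hPQsub : P ⊆ Q := Finset.erase_subset _ _
  have hinj : Set.InjOn (fun R : Finset ℕ => R.erase (n+1)) Pi := by
    intro R1 h1' R2 h2' heq
    have h1 : R1 ∈ Pi := h1'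
    have h2 : R2 ∈ Pi := h2'
    simp only at heq
    by_contra hne
    by_cases hR1 : R1 = Q
    · subst hR1
      have hR2Q : R2 ≠ R1 := fun h => hne h.symm
      rw [hothereq R2 h2 hR2Q] at heq
      -- heq : R1.erase (n+1) = R2, so R2 ⊆ R1
      have hsub : R2 ⊆ R1 := heq ▸ Finset.erase_subset _ _
      obtain ⟨a, ha⟩ := hpart.1 R2 h2
      have : a ∈ R1 ∩ R2 := Finset.mem_inter.2 ⟨hsub ha, ha⟩
      rw [hpart.2.1 R1 h1 R2 h2 hne] at this
      exact Finset.notMem_empty a this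
    · by_cases hR2 : R2 = Q
      · subst hR2
        rw [hothereq R1 h1 hR1] at heq
        have hsub : R1 ⊆ R2 := heq ▸ Finset.erase_subset _ _
        obtain ⟨a, ha⟩ := hpart.1 R1 h1
        have : a ∈ R1 ∩ R2 := Finset.mem_inter.2 ⟨ha, hsub ha⟩
        rw [hpart.2.1 R1 h1 R2 h2 hne] at this
        exact Finset.notMem_empty a this
      · rw [hothereq R1 h1 hR1, hothereq R2 h2 hR2] at heq
        exact hne heq
  set S := Pi.image (fun Q => Q.erase (n+1)) with hSdef
  have hPmem : P ∈ S := Finset.mem_image_of_mem _ hQ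
  have hSpart : IsPartition n S := by
    refine ⟨?_, ?_, ?_⟩
    · intro A hA
      obtain ⟨R, hR, rfl⟩ := Finset.mem_image.1 hA
      by_cases hRQ : R = Q
      · subst hRQ; exact hPne
      · rw [hothereq R hR hRQ]; exact hpart.1 R hR
    · intro A hA B hB hne
      obtain ⟨R1, h1, rfl⟩ := Finset.mem_image.1 hA
      obtain ⟨R2, h2, rfl⟩ := Finset.mem_image.1 hB
      have hne12 : R1 ≠ R2 := fun h => hne (by rw [h])
      have h0 := hpart.2.1 R1 h1 R2 h2 hne12
      have hsub : R1.erase (n+1) ∩ R2.erase (n+1) ⊆ R1 ∩ R2 :=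
        Finset.inter_subset_inter (Finset.erase_subset _ _) (Finset.erase_subset _ _)
      rw [h0] at hsub
      exact Finset.subset_empty.1 hsub
    · ext a
      simp only [Finset.mem_sup, id, Finset.mem_Icc]
      constructor
      · rintro ⟨A, hA, haA⟩
        obtain ⟨R, hR, rfl⟩ := Finset.mem_image.1 hA
        have haR := Finset.mem_of_mem_erase haA
        have hane := (Finset.mem_erase.1 haA).1
        have := part_subset hpart hR haR
        simp only [Finset.mem_Icc] at this
        omega
      · rintro ⟨h1a, han⟩
        obtain ⟨R, hR, haR⟩ := exists_part hpart (Finset.mem_Icc.2 ⟨h1a, by omega⟩)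
        exact ⟨R.erase (n+1), Finset.mem_image_of_mem _ hR,
          Finset.mem_erase.2 ⟨by omega, haR⟩⟩
  have hScard : S.card = Pi.card := Finset.card_image_of_injOn hinj
  have hSmem : S ∈ SPf (d+1) n := mem_SPf.2 ⟨hSpart, by rw [hScard]; exact hcard⟩
  refine ⟨P, hPmem, hSmem, ?_⟩
  have herase : S.erase P = Pi.erase Q := by
    ext A
    simp only [Finset.mem_erase]
    constructor
    · rintro ⟨hAP, hAS⟩
      obtain ⟨R, hR, rfl⟩ := Finset.mem_image.1 hAS
      have hRQ : R ≠ Q := fun h => hAP (by rw [h])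
      rw [hothereq R hR hRQ]
      exact ⟨hRQ, hR⟩
    · rintro ⟨hAQ, hA⟩
      refine ⟨?_, ?_⟩
      · intro rfl'
        obtain ⟨a, ha⟩ := hpart.1 A hA
        have : a ∈ A ∩ Q := Finset.mem_inter.2 ⟨ha, hPQsub (rfl' ▸ ha)⟩
        rw [hpart.2.1 A hA Q hQ hAQ] at this
        exact Finset.notMem_empty a this
      · rw [← hothereq A hA hAQ]
        exact Finset.mem_image_of_mem _ hA
  rw [herase, hQP, Finset.insert_erase hQ]

end Aux3
section Aux4
variable {n : ℕ}

/-- The canonical part of a partition: the part containing `1`. -/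
def canon (S : Finset (Finset ℕ)) : Finset ℕ := S.sup (fun P => if 1 ∈ P then P else ∅)

lemma canon_mem {S : Finset (Finset ℕ)} (h : IsPartition n S) (hn : 1 ≤ n) :
    canon S ∈ S := by
  obtain ⟨P, hP, h1P⟩ := exists_part h (Finset.mem_Icc.2 ⟨le_refl _, hn⟩)
  have : canon S = P := by
    apply le_antisymm
    · apply Finset.sup_le
      intro R hR
      by_cases h1R : 1 ∈ R
      · rw [if_pos h1R, part_unique h hR hP h1R h1P]
      · rw [if_neg h1R]; exact Finset.empty_subset _
    · have h2 := Finset.le_sup (f := fun P => if 1 ∈ P then P else ∅) hP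
      simp only [if_pos h1P] at h2
      exact h2
  rw [this]; exact hP

lemma mulVecLin_bvec {A : Type*} [DecidableEq A] {S S' : Finset A}
    (M : Matrix ↥S' ↥S ℚ) (a : A) :
    M.mulVecLin (bvec S a) = if h : a ∈ S then (fun T => M T ⟨a, h⟩) else 0 := by
  funext T
  simp only [Matrix.mulVecLin_apply, Matrix.mulVec, dotProduct, bvec,
    mul_ite, mul_one, mul_zero]
  split_ifs with h
  · rw [Finset.sum_eq_single (⟨a, h⟩ : ↥S)]
    · simp
    · intro b _ hb
      rw [if_neg]
      exact fun e => hb (Subtype.ext e)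
    · simp
  · rw [show (0 : ↥S' → ℚ) T = 0 from rfl]
    apply Finset.sum_eq_zero
    intro b _
    rw [if_neg]
    exact fun e => h (e ▸ b.2)

lemma single_eq_smul_bvec {A : Type*} [DecidableEq A] {S : Finset A} (x : ↥S) (c : ℚ) :
    Pi.single x c = c • bvec S x.val := by
  funext j
  simp only [Pi.single_apply, Pi.smul_apply, bvec, smul_eq_mul]
  by_cases h : j = x
  · rw [if_pos h, if_pos (Subtype.ext_iff.1 h)]; ring
  · rw [if_neg h, if_neg (fun e => h (Subtype.ext e))]; ring

/-- The section `σ`: insert `n+1` into the canonical part. -/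
noncomputable def sigmaMap (d : ℤ) (n : ℕ) :
    (↥(SPf (d+1) n) → ℚ) →ₗ[ℚ] (↥(SPf (d+1) (n+1)) → ℚ) :=
  Matrix.mulVecLin (Matrix.of fun Pi' S =>
    if Pi'.val = insert (insert (n+1) (canon S.val)) (S.val.erase (canon S.val))
    then (1:ℚ) else 0)

lemma sigma_bvec {d : ℤ} {S : Finset (Finset ℕ)} (hS : S ∈ SPf (d+1) n) :
    sigmaMap d n (bvec (SPf (d+1) n) S)
      = bvec (SPf (d+1) (n+1)) (insert (insert (n+1) (canon S)) (S.erase (canon S))) := by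
  rw [sigmaMap, mulVecLin_bvec, dif_pos hS]
  rfl

lemma piUp_bvec {d : ℤ} {B : Finset (Finset ℕ)} (hB : B ∈ SPf d n) :
    piUp d n (bvec (SPf d n) B) = bvec (SPf (d+1) (n+1)) (insert {n+1} B) := by
  rw [piUp, mulVecLin_bvec, dif_pos hB]
  rfl

lemma piDown_bvec_of_notMem {d : ℤ} {Pi : Finset (Finset ℕ)} (hPi : Pi ∈ SPf (d+1) (n+1))
    (hs : ({n+1} : Finset ℕ) ∉ Pi) :
    piDown (d+1) n (bvec (SPf (d+1) (n+1)) Pi)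
      = bvec (SPf (d+1) n) (Pi.image (fun P => P.erase (n+1))) := by
  rw [piDown, mulVecLin_bvec, dif_pos hPi]
  funext T
  simp only [Matrix.of_apply, bvec, hs, not_false_iff, true_and]

lemma piDown_bvec_of_mem {d : ℤ} {Pi : Finset (Finset ℕ)}
    (hs : ({n+1} : Finset ℕ) ∈ Pi) :
    piDown (d+1) n (bvec (SPf (d+1) (n+1)) Pi) = 0 := by
  rw [piDown, mulVecLin_bvec]
  split_ifs with h
  · funext T
    simp [Matrix.of_apply, hs]
  · rfl

end Aux4
/-- For `n ≥ 4` and `1 ≤ d ≤ n−3`, the kernel of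
`π̃_* : ℚSP_{d+1,n+1} → ℚSP_{d+1,n}` equals the image of `π̃^*` plus the span of
the elements `{P₁∪{n+1},P₂,…,P_{d+4}} − {P₁,P₂∪{n+1},…,P_{d+4}}`. -/
theorem statement8 (n : ℕ) (d : ℤ) (hn : 4 ≤ n) (hd1 : 1 ≤ d) (hd2 : d ≤ (n : ℤ) - 3) :
    LinearMap.ker (piDown (d+1) n)
      = LinearMap.range (piUp d n) ⊔
        Submodule.span ℚ { v | ∃ S : Finset (Finset ℕ), ∃ P1 P2 : Finset ℕ,
          IsPartition n S ∧ (S.card : ℤ) = d + 4 ∧ P1 ∈ S ∧ P2 ∈ S ∧ P1 ≠ P2 ∧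
          v = bvec (SPf (d+1) (n+1)) (insert (insert (n+1) P1) (S.erase P1))
            - bvec (SPf (d+1) (n+1)) (insert (insert (n+1) P2) (S.erase P2)) } := by
  apply le_antisymm
  · -- ker ⊆ range ⊔ span
    intro x hx
    have hx0 : piDown (d+1) n x = 0 := LinearMap.mem_ker.1 hx
    have hbase : x = ∑ Pi : ↥(SPf (d+1) (n+1)), x Pi • bvec (SPf (d+1) (n+1)) Pi.val := by
      conv_lhs => rw [← Finset.univ_sum_single x]
      exact Finset.sum_congr rfl fun Pi _ => single_eq_smul_bvec Pi (x Pi)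
    have hsig : ∑ Pi : ↥(SPf (d+1) (n+1)),
        x Pi • sigmaMap d n (piDown (d+1) n (bvec (SPf (d+1) (n+1)) Pi.val))
        = sigmaMap d n (piDown (d+1) n x) := by
      conv_rhs => rw [hbase]
      rw [map_sum, map_sum]
      exact Finset.sum_congr rfl fun Pi _ => by rw [map_smul, map_smul]
    have hxeq : x = ∑ Pi : ↥(SPf (d+1) (n+1)), x Pi •
        (bvec (SPf (d+1) (n+1)) Pi.val
          - sigmaMap d n (piDown (d+1) n (bvec (SPf (d+1) (n+1)) Pi.val))) := by
      simp only [smul_sub]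
      rw [Finset.sum_sub_distrib, hsig, hx0, map_zero, sub_zero, ← hbase]
    rw [hxeq]
    apply Submodule.sum_mem
    intro Pi _
    apply Submodule.smul_mem
    by_cases h1 : ({n+1} : Finset ℕ) ∈ Pi.val
    · rw [piDown_bvec_of_mem h1, map_zero, sub_zero]
      apply Submodule.mem_sup_left
      obtain ⟨hB, hins⟩ := singleton_case Pi.2 h1
      exact ⟨bvec (SPf d n) (Pi.val.erase {n+1}), by rw [piUp_bvec hB, hins]⟩
    · obtain ⟨P, hPmem, hS, hrec⟩ := partition_decomp Pi.2 h1
      rw [piDown_bvec_of_notMem Pi.2 h1, sigma_bvec hS]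
      apply Submodule.mem_sup_right
      obtain ⟨hSpart, hScard⟩ := mem_SPf.1 hS
      set S := Pi.val.image (fun Q => Q.erase (n+1)) with hSdef
      by_cases hPc : P = canon S
      · rw [hrec, hPc, sub_self]
        exact Submodule.zero_mem _
      · apply Submodule.subset_span
        exact ⟨S, P, canon S, hSpart, by omega, hPmem,
          canon_mem hSpart (by omega), hPc, by rw [hrec]⟩
  · apply sup_le
    · -- range piUp ⊆ ker piDown
      rw [LinearMap.range_le_ker_iff]
      have hM : (Matrix.of fun (B' : ↥(SPf (d+1) n)) (B : ↥(SPf (d+1) (n+1))) =>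
            if ({n+1} : Finset ℕ) ∉ B.val ∧
              B'.val = B.val.image (fun P => P.erase (n+1)) then (1:ℚ) else 0)
          * (Matrix.of fun (B' : ↥(SPf (d+1) (n+1))) (B : ↥(SPf d n)) =>
            if B'.val = insert {n+1} B.val then (1:ℚ) else 0) = 0 := by
        ext T B
        rw [Matrix.mul_apply, Matrix.zero_apply]
        apply Finset.sum_eq_zero
        intro Pi _
        by_cases hc : Pi.val = insert {n+1} B.val
        · rw [Matrix.of_apply, if_neg, zero_mul]
          rintro ⟨ha, -⟩
          exact ha (hc ▸ Finset.mem_insert_self _ _)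
        · rw [Matrix.of_apply (fun (B' : ↥(SPf (d+1) (n+1))) (B : ↥(SPf d n)) =>
            if B'.val = insert {n+1} B.val then (1:ℚ) else 0), if_neg hc, mul_zero]
      rw [piDown, piUp, ← Matrix.mulVecLin_mul, hM, Matrix.mulVecLin_zero]
    · rw [Submodule.span_le]
      rintro v ⟨S, P1, P2, hSpart, hScard, hP1, hP2, hne, rfl⟩
      rw [SetLike.mem_coe, LinearMap.mem_ker, map_sub]
      obtain ⟨hpart1, hcard1, hnm1, himg1⟩ := insert_part_partition hSpart hP1
      obtain ⟨hpart2, hcard2, hnm2, himg2⟩ := insert_part_partition hSpart hP2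
      have hmem1 : insert (insert (n+1) P1) (S.erase P1) ∈ SPf (d+1) (n+1) :=
        mem_SPf.2 ⟨hpart1, by rw [hcard1]; omega⟩
      have hmem2 : insert (insert (n+1) P2) (S.erase P2) ∈ SPf (d+1) (n+1) :=
        mem_SPf.2 ⟨hpart2, by rw [hcard2]; omega⟩
      rw [piDown_bvec_of_notMem hmem1 hnm1, piDown_bvec_of_notMem hmem2 hnm2,
        himg1, himg2, sub_self]
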